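/- Let q, r : ℝ → ℝ be three times differentiable functions satisfying the stationary AKNS equations (1/4)q'''(x) - (3/2)q(x)r(x)q'(x) = 0 and (1/4)r'''(x) - (3/2)q(x)r(x)r'(x) = 0 for all x. Then the functions h₀ = -(1/16)q''r'' + (1/8)qr²q'' + (1/8)q²r r'' + (1/8)qr q'r' - (1/16)q²(r')² - (1/16)r²(q')² - (1/4)q³r³, h₁ = (1/8)q'r'' - (1/8)r'q'', and h₂ = -(1/4)q r'' - (1/4)r q'' + (1/4)q'r' + (3/4)q²r² (all evaluated at x) are constant in x. -/

import Mathlib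

/-!
The stationary system is the first-order ODE on the phase space `(q, q', q'', r, r', r'')` with
vector field `(q', q'', 6 q r q', r', r'', 6 q r r')`. Each `hₖ` is a polynomial on phase space
whose derivative along this vector field vanishes identically, so by the chain rule it has zero
derivative along every solution and is therefore constant.
-/

variable {𝕜 : Type*} [RCLike 𝕜]

theorem eq_of_forall_hasDerivAt_zero {G : Type*} [NormedAddCommGroup G] [NormedSpace 𝕜 G]
    {f : 𝕜 → G} (hf : ∀ x, HasDerivAt f 0 x) (x y : 𝕜) : f x = f y :=
  is_const_of_deriv_eq_zero (fun z => (hf z).differentiableAt) (fun z => (hf z).deriv) x y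

namespace StationaryAKNS

/-- `q₁, q₂` stand for `q', q''` (likewise for `r`); the last two fields are `K₄ = 0`. -/
structure IsSolution (q q₁ q₂ r r₁ r₂ : 𝕜 → 𝕜) : Prop where
  hasDerivAt_q : ∀ x, HasDerivAt q (q₁ x) x
  hasDerivAt_q₁ : ∀ x, HasDerivAt q₁ (q₂ x) x
  hasDerivAt_q₂ : ∀ x, HasDerivAt q₂ (6 * q x * r x * q₁ x) x
  hasDerivAt_r : ∀ x, HasDerivAt r (r₁ x) x
  hasDerivAt_r₁ : ∀ x, HasDerivAt r₁ (r₂ x) x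
  hasDerivAt_r₂ : ∀ x, HasDerivAt r₂ (6 * q x * r x * r₁ x) x

def h₀ (q q₁ q₂ r r₁ r₂ : 𝕜) : 𝕜 :=
  -(1 / 16) * q₂ * r₂ + 1 / 8 * q * r ^ 2 * q₂ + 1 / 8 * q ^ 2 * r * r₂ + 1 / 8 * q * r * q₁ * r₁
    - 1 / 16 * q ^ 2 * r₁ ^ 2 - 1 / 16 * r ^ 2 * q₁ ^ 2 - 1 / 4 * q ^ 3 * r ^ 3

def h₁ (q₁ q₂ r₁ r₂ : 𝕜) : 𝕜 :=
  1 / 8 * q₁ * r₂ - 1 / 8 * r₁ * q₂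

def h₂ (q q₁ q₂ r r₁ r₂ : 𝕜) : 𝕜 :=
  -(1 / 4) * q * r₂ - 1 / 4 * r * q₂ + 1 / 4 * q₁ * r₁ + 3 / 4 * q ^ 2 * r ^ 2

theorem IsSolution.of_deriv {q r : 𝕜 → 𝕜}
    (hq : Differentiable 𝕜 q) (hq' : Differentiable 𝕜 (deriv q))
    (hq'' : Differentiable 𝕜 (deriv (deriv q)))
    (hr : Differentiable 𝕜 r) (hr' : Differentiable 𝕜 (deriv r))
    (hr'' : Differentiable 𝕜 (deriv (deriv r)))
    (heq1 : ∀ x, 1 / 4 * deriv (deriv (deriv q)) x - 3 / 2 * q x * r x * deriv q x = 0)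
    (heq2 : ∀ x, 1 / 4 * deriv (deriv (deriv r)) x - 3 / 2 * q x * r x * deriv r x = 0) :
    IsSolution q (deriv q) (deriv (deriv q)) r (deriv r) (deriv (deriv r)) where
  hasDerivAt_q x := (hq x).hasDerivAt
  hasDerivAt_q₁ x := (hq' x).hasDerivAt
  hasDerivAt_q₂ x :=
    (hq'' x).hasDerivAt.congr_deriv (by linear_combination 4 * heq1 x)
  hasDerivAt_r x := (hr x).hasDerivAt
  hasDerivAt_r₁ x := (hr' x).hasDerivAt
  hasDerivAt_r₂ x :=
    (hr'' x).hasDerivAt.congr_deriv (by linear_combination 4 * heq2 x)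

namespace IsSolution

variable {q q₁ q₂ r r₁ r₂ : 𝕜 → 𝕜}

theorem hasDerivAt_h₀ (S : IsSolution q q₁ q₂ r r₁ r₂) (x : 𝕜) :
    HasDerivAt (fun x => h₀ (q x) (q₁ x) (q₂ x) (r x) (r₁ x) (r₂ x)) 0 x := by
  have hq := S.hasDerivAt_q x
  have hq₁ := S.hasDerivAt_q₁ x
  have hq₂ := S.hasDerivAt_q₂ x
  have hr := S.hasDerivAt_r x
  have hr₁ := S.hasDerivAt_r₁ x
  have hr₂ := S.hasDerivAt_r₂ x
  have H := ((hq₂.const_mul (-(1 / 16))).mul hr₂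
    |>.add (((hq.const_mul (1 / 8)).mul (hr.pow 2)).mul hq₂)
    |>.add ((((hq.pow 2).const_mul (1 / 8)).mul hr).mul hr₂)
    |>.add ((((hq.const_mul (1 / 8)).mul hr).mul hq₁).mul hr₁)
    |>.sub (((hq.pow 2).const_mul (1 / 16)).mul (hr₁.pow 2))
    |>.sub (((hr.pow 2).const_mul (1 / 16)).mul (hq₁.pow 2))
    |>.sub (((hq.pow 3).const_mul (1 / 4)).mul (hr.pow 3)))
  refine H.congr_deriv ?_
  simp only [Pi.mul_apply, Pi.pow_apply]
  ring

theorem hasDerivAt_h₁ (S : IsSolution q q₁ q₂ r r₁ r₂) (x : 𝕜) :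
    HasDerivAt (fun x => h₁ (q₁ x) (q₂ x) (r₁ x) (r₂ x)) 0 x := by
  have H := (((S.hasDerivAt_q₁ x).const_mul (1 / 8)).mul (S.hasDerivAt_r₂ x)).sub
    (((S.hasDerivAt_r₁ x).const_mul (1 / 8)).mul (S.hasDerivAt_q₂ x))
  refine H.congr_deriv ?_
  ring

theorem hasDerivAt_h₂ (S : IsSolution q q₁ q₂ r r₁ r₂) (x : 𝕜) :
    HasDerivAt (fun x => h₂ (q x) (q₁ x) (q₂ x) (r x) (r₁ x) (r₂ x)) 0 x := by
  have hq := S.hasDerivAt_q x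
  have hr := S.hasDerivAt_r x
  have H := ((((hq.const_mul (-(1 / 4))).mul (S.hasDerivAt_r₂ x)).sub
    ((hr.const_mul (1 / 4)).mul (S.hasDerivAt_q₂ x))).add
    (((S.hasDerivAt_q₁ x).const_mul (1 / 4)).mul (S.hasDerivAt_r₁ x))).add
    (((hq.pow 2).const_mul (3 / 4)).mul (hr.pow 2))
  refine H.congr_deriv ?_
  simp only [Pi.pow_apply]
  ring

end IsSolution

end StationaryAKNS

open StationaryAKNS in
theorem stationary_n3_integrals (q r : ℝ → ℝ)
    (hq : Differentiable ℝ q) (hq' : Differentiable ℝ (deriv q))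
    (hq'' : Differentiable ℝ (deriv (deriv q)))
    (hr : Differentiable ℝ r) (hr' : Differentiable ℝ (deriv r))
    (hr'' : Differentiable ℝ (deriv (deriv r)))
    (heq1 : ∀ x, 1 / 4 * deriv (deriv (deriv q)) x - 3 / 2 * q x * r x * deriv q x = 0)
    (heq2 : ∀ x, 1 / 4 * deriv (deriv (deriv r)) x - 3 / 2 * q x * r x * deriv r x = 0) :
    let h₀ : ℝ → ℝ := fun x =>
      -(1 / 16) * deriv (deriv q) x * deriv (deriv r) x
        + 1 / 8 * q x * (r x) ^ 2 * deriv (deriv q) x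
        + 1 / 8 * (q x) ^ 2 * r x * deriv (deriv r) x
        + 1 / 8 * q x * r x * deriv q x * deriv r x
        - 1 / 16 * (q x) ^ 2 * (deriv r x) ^ 2
        - 1 / 16 * (r x) ^ 2 * (deriv q x) ^ 2
        - 1 / 4 * (q x) ^ 3 * (r x) ^ 3
    let h₁ : ℝ → ℝ := fun x =>
      1 / 8 * deriv q x * deriv (deriv r) x - 1 / 8 * deriv r x * deriv (deriv q) x
    let h₂ : ℝ → ℝ := fun x =>
      -(1 / 4) * q x * deriv (deriv r) x - 1 / 4 * r x * deriv (deriv q) x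
        + 1 / 4 * deriv q x * deriv r x + 3 / 4 * (q x) ^ 2 * (r x) ^ 2
    (∀ x y : ℝ, h₀ x = h₀ y) ∧ (∀ x y : ℝ, h₁ x = h₁ y) ∧ (∀ x y : ℝ, h₂ x = h₂ y) := by
  have S := IsSolution.of_deriv hq hq' hq'' hr hr' hr'' heq1 heq2
  exact ⟨eq_of_forall_hasDerivAt_zero S.hasDerivAt_h₀, eq_of_forall_hasDerivAt_zero S.hasDerivAt_h₁,
    eq_of_forall_hasDerivAt_zero S.hasDerivAt_h₂⟩
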